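/- Let R be a reduced crystallographic root system with set of positive roots R⁺ and simple roots S, and let I be a subset of S. For every positive root β in R⁺ \ R_I⁺ one has ⟨Σ_{α ∈ I} ϖ_α − Σ_{γ ∈ R_I⁺} γ , β∨⟩ ≥ 0. -/

import Mathlib

/-!
Common setup: a reduced crystallographic root system realized in a real inner
product space, together with a chosen set of simple roots.  For a root `α`,
`cpair v α = ⟨v, α∨⟩ = 2⟪v,α⟫/⟪α,α⟫` is the pairing with the coroot `α∨`, and
`sref α` is the reflection in `α`.
-/

open scoped RealInnerProductSpace
open Finset

/-- `cpair v α = ⟨v, α∨⟩ = 2⟪v,α⟫/⟪α,α⟫`, the pairing of `v` with the coroot of `α`. -/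
noncomputable def cpair {V : Type*} [NormedAddCommGroup V] [InnerProductSpace ℝ V]
    (v α : V) : ℝ := 2 * ⟪v, α⟫ / ⟪α, α⟫

/-- The reflection in the root `α`: `v ↦ v - ⟨v, α∨⟩ α`. -/
noncomputable def sref {V : Type*} [NormedAddCommGroup V] [InnerProductSpace ℝ V]
    (α : V) : V → V := fun v => v - cpair v α • α

/-- A reduced crystallographic root system in a real inner product space,
with a chosen set of simple roots (every root is an integral linear combination
of the simple roots, with coefficients all nonnegative or all nonpositive). -/
structure RCRS (V : Type*) [NormedAddCommGroup V] [InnerProductSpace ℝ V] where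
  roots : Finset V
  zero_not_mem : (0 : V) ∉ roots
  crystallographic : ∀ α ∈ roots, ∀ β ∈ roots, ∃ n : ℤ, cpair β α = (n : ℝ)
  reflect_mem : ∀ α ∈ roots, ∀ β ∈ roots, sref α β ∈ roots
  reduced : ∀ α ∈ roots, ∀ t : ℝ, t • α ∈ roots → t = 1 ∨ t = -1
  simple : Finset V
  simple_subset : simple ⊆ roots
  simple_indep : LinearIndependent ℝ ((↑) : simple → V)
  exists_coeffs : ∀ β ∈ roots, ∃ c : V → ℤ,
    ((∀ α ∈ simple, 0 ≤ c α) ∨ (∀ α ∈ simple, c α ≤ 0)) ∧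
    β = ∑ α ∈ simple, (c α : ℝ) • α

namespace RCRS

variable {V : Type*} [NormedAddCommGroup V] [InnerProductSpace ℝ V] [DecidableEq V] (Φ : RCRS V)

open Classical in
/-- `R⁺`: the set of positive roots, i.e. the roots that are nonnegative integral
linear combinations of simple roots. -/
noncomputable def posRoots : Finset V :=
  Φ.roots.filter (fun β => ∃ c : V → ℤ, (∀ α ∈ Φ.simple, 0 ≤ c α) ∧
    β = ∑ α ∈ Φ.simple, (c α : ℝ) • α)

open Classical in
/-- `R_I⁺`: the set of positive roots that are integral linear combinations of the
simple roots belonging to `I`. -/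
noncomputable def posRootsOf (I : Finset V) : Finset V :=
  Φ.posRoots.filter (fun β => ∃ c : V → ℤ, β = ∑ α ∈ I, (c α : ℝ) • α)

/-- `ρ`: the half sum of the positive roots. -/
noncomputable def rho : V := (2 : ℝ)⁻¹ • ∑ β ∈ Φ.posRoots, β

/-- `ρ^P`: the half sum of the positive roots that are not in `R_I⁺`. -/
noncomputable def rhoP (I : Finset V) : V :=
  (2 : ℝ)⁻¹ • ∑ β ∈ Φ.posRoots \ Φ.posRootsOf I, β

/-- `ϖ` is a system of fundamental weights: `⟨ϖ α, β∨⟩ = δ_{α β}` for simple `α`, `β`. -/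
def IsFundamentalWeights (ϖ : V → V) : Prop :=
  ∀ α ∈ Φ.simple, ∀ β ∈ Φ.simple, cpair (ϖ α) β = if α = β then 1 else 0

/-- The product of the reflections in the roots listed in `l`
(`wordProd [α₁, …, α_N] = s_{α₁} ∘ ⋯ ∘ s_{α_N}`). -/
noncomputable def wordProd : List V → (V → V) :=
  fun l => l.foldr (fun α f => sref α ∘ f) id

/-- Membership in the subgroup of the Weyl group generated by the reflections
`s_α`, `α ∈ I`. -/
def MemWeyl (I : Finset V) (w : V → V) : Prop :=
  ∃ l : List V, (∀ α ∈ l, α ∈ I) ∧ w = wordProd l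

/-- The length of `w` with respect to the generators `s_α`, `α ∈ I`. -/
noncomputable def lengthWeyl (I : Finset V) (w : V → V) : ℕ :=
  sInf {n | ∃ l : List V, l.length = n ∧ (∀ α ∈ l, α ∈ I) ∧ w = wordProd l}

/-- `w` is the longest element of the subgroup generated by the reflections
`s_α`, `α ∈ I`. -/
def IsLongest (I : Finset V) (w : V → V) : Prop :=
  MemWeyl I w ∧ ∀ u, MemWeyl I u → lengthWeyl I u ≤ lengthWeyl I w

end RCRS

/-!
Let `μ = Σ_{α ∈ I} ϖ_α` and `Q = Σ R_I⁺`. For `a ∈ I` one has `⟨μ, a∨⟩ = 1` and `⟨Q, a∨⟩ = 2`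
(the reflection `s_a` permutes `R_I⁺ \ {a}` and negates `a`), so `μ - Q/2` is fixed by the
parabolic Weyl group `W_I`. Its longest element `w` sends `R_I⁺` onto `-R_I⁺`, hence `w Q = -Q`
and `w μ = μ - Q`. Elements of `W_I` do not change the coordinates of a root along the simple roots
outside `I`, so they preserve `R⁺ \ R_I⁺`; thus `⟨μ - Q, β∨⟩ = ⟨μ, (w⁻¹ β)∨⟩ ≥ 0` because `μ` is
dominant.
-/

section Reflection

variable {V : Type*} [NormedAddCommGroup V] [InnerProductSpace ℝ V]

lemma cpair_add (u v α : V) : cpair (u + v) α = cpair u α + cpair v α := by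
  simp only [cpair, inner_add_left]; ring

lemma cpair_smul (r : ℝ) (v α : V) : cpair (r • v) α = r * cpair v α := by
  simp only [cpair, real_inner_smul_left]; ring

lemma cpair_sub (u v α : V) : cpair (u - v) α = cpair u α - cpair v α := by
  simp only [cpair, inner_sub_left]; ring

lemma cpair_sum {ι : Type*} (s : Finset ι) (f : ι → V) (α : V) :
    cpair (∑ i ∈ s, f i) α = ∑ i ∈ s, cpair (f i) α := by
  simp only [cpair, sum_inner, Finset.mul_sum, Finset.sum_div]

lemma cpair_self {α : V} (hα : α ≠ 0) : cpair α α = 2 := by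
  rw [cpair, mul_div_assoc, div_self (inner_self_ne_zero.2 hα), mul_one]

lemma cpair_nonneg_iff {α : V} (hα : α ≠ 0) (v : V) : 0 ≤ cpair v α ↔ 0 ≤ ⟪v, α⟫ := by
  rw [cpair, le_div_iff₀ (real_inner_self_pos.2 hα), zero_mul]
  constructor <;> intro h <;> linarith

lemma sref_self {α : V} (hα : α ≠ 0) : sref α α = -α := by
  rw [sref, cpair_self hα, two_smul]; abel

lemma sref_of_cpair_eq_zero {α v : V} (h : cpair v α = 0) : sref α v = v := by
  rw [sref, h, zero_smul, sub_zero]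

-- `cpair v 0 = 0` because of the junk value `x / 0 = 0`, so `sref 0 = id`.
lemma sref_sref (α v : V) : sref α (sref α v) = v := by
  rcases eq_or_ne α 0 with rfl | hα
  · simp [sref]
  · have hαα : ⟪α, α⟫ ≠ 0 := inner_self_ne_zero.2 hα
    simp only [sref, cpair, inner_sub_left, real_inner_smul_left]
    rw [sub_sub, ← add_smul, sub_eq_self, smul_eq_zero]
    left
    field_simp
    ring

lemma inner_sref_sref (α u v : V) : ⟪sref α u, sref α v⟫ = ⟪u, v⟫ := by
  rcases eq_or_ne α 0 with rfl | hα
  · simp [sref]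
  · have hαα : ⟪α, α⟫ ≠ 0 := inner_self_ne_zero.2 hα
    simp only [sref, cpair, inner_sub_left, inner_sub_right, real_inner_smul_left,
      real_inner_smul_right, real_inner_comm α]
    field_simp
    ring

noncomputable def srefₗ (α : V) : V →ₗ[ℝ] V where
  toFun := sref α
  map_add' u v := by simp only [sref, cpair_add, add_smul]; abel
  map_smul' r v := by simp only [sref, cpair_smul, mul_smul, smul_sub, RingHom.id_apply]

noncomputable def wordProdₗ (l : List V) : V →ₗ[ℝ] V where
  toFun := RCRS.wordProd l
  map_add' u v := by
    induction l with
    | nil => rfl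
    | cons a l ih => exact ((srefₗ a).congr_arg ih).trans ((srefₗ a).map_add _ _)
  map_smul' r v := by
    induction l with
    | nil => rfl
    | cons a l ih => exact ((srefₗ a).congr_arg ih).trans ((srefₗ a).map_smul _ _)

lemma wordProdₗ_cons (a : V) (l : List V) (v : V) :
    wordProdₗ (a :: l) v = sref a (wordProdₗ l v) := rfl

lemma wordProdₗ_append_singleton (l : List V) (a v : V) :
    wordProdₗ (l ++ [a]) v = wordProdₗ l (sref a v) := by
  induction l with
  | nil => rfl
  | cons b l ih => simp only [List.cons_append, wordProdₗ_cons, ih]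

lemma wordProdₗ_reverse_wordProdₗ (l : List V) (v : V) :
    wordProdₗ l.reverse (wordProdₗ l v) = v := by
  induction l generalizing v with
  | nil => rfl
  | cons a l ih => rw [List.reverse_cons, wordProdₗ_append_singleton, wordProdₗ_cons, sref_sref, ih]

lemma wordProdₗ_wordProdₗ_reverse (l : List V) (v : V) :
    wordProdₗ l (wordProdₗ l.reverse v) = v := by
  simpa using wordProdₗ_reverse_wordProdₗ l.reverse v

lemma wordProdₗ_injective (l : List V) : Function.Injective (wordProdₗ l) :=
  Function.LeftInverse.injective (wordProdₗ_reverse_wordProdₗ l)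

lemma inner_wordProdₗ (l : List V) (u v : V) : ⟪wordProdₗ l u, wordProdₗ l v⟫ = ⟪u, v⟫ := by
  induction l with
  | nil => rfl
  | cons a l ih => rw [wordProdₗ_cons, wordProdₗ_cons, inner_sref_sref, ih]

lemma cpair_wordProdₗ (l : List V) (u v : V) :
    cpair (wordProdₗ l u) (wordProdₗ l v) = cpair u v := by
  simp only [cpair, inner_wordProdₗ]

lemma wordProdₗ_of_cpair_eq_zero {l : List V} {v : V} (h : ∀ α ∈ l, cpair v α = 0) :
    wordProdₗ l v = v := by
  induction l with
  | nil => rfl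
  | cons a l ih =>
    rw [wordProdₗ_cons, ih fun α hα => h α (List.mem_cons_of_mem a hα),
      sref_of_cpair_eq_zero (h a List.mem_cons_self)]

end Reflection

namespace RCRS

variable {V : Type*} [NormedAddCommGroup V] [InnerProductSpace ℝ V] (Φ : RCRS V)

lemma ne_zero_of_mem_roots {β : V} (hβ : β ∈ Φ.roots) : β ≠ 0 :=
  fun h => Φ.zero_not_mem (h ▸ hβ)

lemma neg_mem_roots {β : V} (hβ : β ∈ Φ.roots) : -β ∈ Φ.roots := by
  simpa [sref_self (Φ.ne_zero_of_mem_roots hβ)] using Φ.reflect_mem β hβ β hβ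

open Classical in
/-- Coordinates with respect to the simple roots, read off from a basis of `V` extending them
(the zero functional for `δ ∉ simple`). -/
noncomputable def coord (δ : V) : V →ₗ[ℝ] ℝ :=
  if h : δ ∈ Φ.simple then
    (Module.Basis.extend (linearIndependent_subtype_iff.mp Φ.simple_indep)).coord
      ⟨δ, Module.Basis.subset_extend _ h⟩
  else 0

variable {Φ}

lemma coord_simple [DecidableEq V] {δ α : V} (hδ : δ ∈ Φ.simple) (hα : α ∈ Φ.simple) :
    Φ.coord δ α = if α = δ then 1 else 0 := by
  have hind := linearIndependent_subtype_iff.mp Φ.simple_indep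
  have hα' : α = Module.Basis.extend hind ⟨α, Module.Basis.subset_extend hind hα⟩ :=
    (Module.Basis.extend_apply_self hind ⟨α, _⟩).symm
  rw [coord, dif_pos hδ, hα', Module.Basis.coord_apply, Module.Basis.repr_self,
    Finsupp.single_apply]
  simp [Module.Basis.extend_apply_self, eq_comm]

lemma coord_sum_smul [DecidableEq V] {T : Finset V} (hT : T ⊆ Φ.simple) (c : V → ℝ) {δ : V}
    (hδ : δ ∈ Φ.simple) : Φ.coord δ (∑ α ∈ T, c α • α) = if δ ∈ T then c δ else 0 := by
  simp only [map_sum, map_smul, smul_eq_mul]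
  rw [Finset.sum_congr rfl fun α hα => by rw [coord_simple hδ (hT hα), mul_ite, mul_one, mul_zero],
    Finset.sum_ite_eq']

lemma coord_eq_of_eq_sum {β : V} {c : V → ℤ} (hβ : β = ∑ α ∈ Φ.simple, (c α : ℝ) • α)
    {δ : V} (hδ : δ ∈ Φ.simple) : Φ.coord δ β = c δ := by
  classical
  rw [hβ, coord_sum_smul subset_rfl _ hδ, if_pos hδ]

lemma eq_sum_coord {β : V} (hβ : β ∈ Φ.roots) : β = ∑ δ ∈ Φ.simple, Φ.coord δ β • δ := by
  obtain ⟨c, -, hc⟩ := Φ.exists_coeffs β hβ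
  conv_lhs => rw [hc]
  exact Finset.sum_congr rfl fun δ hδ => by rw [coord_eq_of_eq_sum hc hδ]

lemma exists_coord_ne_zero {β : V} (hβ : β ∈ Φ.roots) : ∃ δ ∈ Φ.simple, Φ.coord δ β ≠ 0 := by
  by_contra! h
  refine Φ.ne_zero_of_mem_roots hβ ?_
  rw [eq_sum_coord hβ]
  exact Finset.sum_eq_zero fun δ hδ => by rw [h δ hδ, zero_smul]

lemma coord_nonneg_or_nonpos {β : V} (hβ : β ∈ Φ.roots) :
    (∀ δ ∈ Φ.simple, 0 ≤ Φ.coord δ β) ∨ ∀ δ ∈ Φ.simple, Φ.coord δ β ≤ 0 := by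
  obtain ⟨c, hc | hc, hβc⟩ := Φ.exists_coeffs β hβ
  · exact .inl fun δ hδ => by rw [coord_eq_of_eq_sum hβc hδ]; exact_mod_cast hc δ hδ
  · exact .inr fun δ hδ => by rw [coord_eq_of_eq_sum hβc hδ]; exact_mod_cast hc δ hδ

lemma mem_posRoots_iff {β : V} :
    β ∈ Φ.posRoots ↔ β ∈ Φ.roots ∧ ∀ δ ∈ Φ.simple, 0 ≤ Φ.coord δ β := by
  simp only [posRoots, Finset.mem_filter, and_congr_right_iff]
  refine fun hβ => ⟨fun ⟨c, hc, hβc⟩ δ hδ => ?_, fun h => ?_⟩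
  · rw [coord_eq_of_eq_sum hβc hδ]; exact_mod_cast hc δ hδ
  · obtain ⟨c, -, hβc⟩ := Φ.exists_coeffs β hβ
    exact ⟨c, fun δ hδ => by exact_mod_cast (coord_eq_of_eq_sum hβc hδ) ▸ h δ hδ, hβc⟩

lemma mem_roots_of_mem_posRoots {β : V} (hβ : β ∈ Φ.posRoots) : β ∈ Φ.roots :=
  (mem_posRoots_iff.1 hβ).1

lemma mem_posRoots_of_coord_pos {β δ : V} (hβ : β ∈ Φ.roots) (hδ : δ ∈ Φ.simple)
    (hpos : 0 < Φ.coord δ β) : β ∈ Φ.posRoots := by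
  refine mem_posRoots_iff.2 ⟨hβ, (coord_nonneg_or_nonpos hβ).resolve_right fun h => ?_⟩
  exact (h δ hδ).not_gt hpos

lemma coord_nonpos_of_not_mem_posRoots {β : V} (hβ : β ∈ Φ.roots) (hβ' : β ∉ Φ.posRoots) :
    ∀ δ ∈ Φ.simple, Φ.coord δ β ≤ 0 :=
  (coord_nonneg_or_nonpos hβ).resolve_left fun h => hβ' (mem_posRoots_iff.2 ⟨hβ, h⟩)

lemma neg_not_mem_posRoots {β : V} (hβ : β ∈ Φ.posRoots) : -β ∉ Φ.posRoots := by
  intro hnβ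
  obtain ⟨δ, hδ, hne⟩ := exists_coord_ne_zero (mem_roots_of_mem_posRoots hβ)
  have h₁ := (mem_posRoots_iff.1 hβ).2 δ hδ
  have h₂ := (mem_posRoots_iff.1 hnβ).2 δ hδ
  rw [map_neg] at h₂
  exact hne (by linarith)

lemma mem_posRootsOf_iff {I : Finset V} (hI : I ⊆ Φ.simple) {β : V} :
    β ∈ Φ.posRootsOf I ↔ β ∈ Φ.posRoots ∧ ∀ δ ∈ Φ.simple, δ ∉ I → Φ.coord δ β = 0 := by
  classical
  simp only [posRootsOf, Finset.mem_filter, and_congr_right_iff]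
  refine fun hβ => ⟨fun ⟨c, hβc⟩ δ hδ hδI => ?_, fun h => ?_⟩
  · rw [hβc, coord_sum_smul hI _ hδ, if_neg hδI]
  · obtain ⟨c, -, hβc⟩ := Φ.exists_coeffs β (mem_roots_of_mem_posRoots hβ)
    refine ⟨c, hβc.trans (Finset.sum_subset hI fun δ hδ hδI => ?_).symm⟩
    rw [← coord_eq_of_eq_sum hβc hδ, h δ hδ hδI, zero_smul]

lemma coord_sref_of_ne {a δ : V} (ha : a ∈ Φ.simple) (hδ : δ ∈ Φ.simple) (hne : δ ≠ a) (v : V) :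
    Φ.coord δ (sref a v) = Φ.coord δ v := by
  classical
  rw [sref, map_sub, map_smul, coord_simple hδ ha, if_neg hne.symm, smul_zero, sub_zero]

lemma exists_coord_pos_of_ne {a γ : V} (ha : a ∈ Φ.simple) (hγ : γ ∈ Φ.posRoots) (hne : γ ≠ a) :
    ∃ δ ∈ Φ.simple, δ ≠ a ∧ 0 < Φ.coord δ γ := by
  by_contra! h
  have hγr := mem_roots_of_mem_posRoots hγ
  have hcoord := (mem_posRoots_iff.1 hγ).2
  have hγa : γ = Φ.coord a γ • a := by
    conv_lhs => rw [eq_sum_coord hγr]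
    refine Finset.sum_eq_single_of_mem a ha fun δ hδ hδa => ?_
    rw [le_antisymm (h δ hδ hδa) (hcoord δ hδ), zero_smul]
  rcases Φ.reduced a (Φ.simple_subset ha) _ (hγa ▸ hγr) with h₁ | h₁
  · exact hne (by rw [hγa, h₁, one_smul])
  · linarith [hcoord a ha]

lemma sref_mem_posRoots {a γ : V} (ha : a ∈ Φ.simple) (hγ : γ ∈ Φ.posRoots) (hne : γ ≠ a) :
    sref a γ ∈ Φ.posRoots := by
  obtain ⟨δ, hδ, hδa, hpos⟩ := exists_coord_pos_of_ne ha hγ hne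
  refine mem_posRoots_of_coord_pos ?_ hδ (by rwa [coord_sref_of_ne ha hδ hδa])
  exact Φ.reflect_mem a (Φ.simple_subset ha) γ (mem_roots_of_mem_posRoots hγ)

lemma simple_mem_posRoots {a : V} (ha : a ∈ Φ.simple) : a ∈ Φ.posRoots := by
  classical
  refine mem_posRoots_iff.2 ⟨Φ.simple_subset ha, fun δ hδ => ?_⟩
  rw [coord_simple hδ ha]
  split_ifs <;> norm_num

lemma posRootsOf_subset (I : Finset V) : Φ.posRootsOf I ⊆ Φ.posRoots := by
  classical
  exact Finset.filter_subset _ _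

variable {I : Finset V}

lemma simple_mem_posRootsOf (hI : I ⊆ Φ.simple) {a : V} (ha : a ∈ I) : a ∈ Φ.posRootsOf I := by
  refine (mem_posRootsOf_iff hI).2 ⟨simple_mem_posRoots (hI ha), fun δ hδ hδI => ?_⟩
  classical
  rw [coord_simple hδ (hI ha), if_neg fun h : a = δ => hδI (h ▸ ha)]

lemma sref_mem_posRootsOf (hI : I ⊆ Φ.simple) {a γ : V} (ha : a ∈ I)
    (hγ : γ ∈ Φ.posRootsOf I) (hne : γ ≠ a) : sref a γ ∈ Φ.posRootsOf I := by
  rw [mem_posRootsOf_iff hI] at hγ ⊢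
  refine ⟨sref_mem_posRoots (hI ha) hγ.1 hne, fun δ hδ hδI => ?_⟩
  rw [coord_sref_of_ne (hI ha) hδ (fun h => hδI (h ▸ ha)), hγ.2 δ hδ hδI]

lemma sref_mem_erase_posRootsOf [DecidableEq V] (hI : I ⊆ Φ.simple) {a γ : V} (ha : a ∈ I)
    (hγ : γ ∈ (Φ.posRootsOf I).erase a) : sref a γ ∈ (Φ.posRootsOf I).erase a := by
  obtain ⟨hne, hγ⟩ := Finset.mem_erase.1 hγ
  refine Finset.mem_erase.2 ⟨fun h => ?_, sref_mem_posRootsOf hI ha hγ hne⟩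
  have hγa : γ = -a := by
    rw [← sref_sref a γ, h, sref_self (Φ.ne_zero_of_mem_roots (Φ.simple_subset (hI ha)))]
  exact neg_not_mem_posRoots (simple_mem_posRoots (hI ha)) (hγa ▸ posRootsOf_subset I hγ)

lemma cpair_sum_posRootsOf (hI : I ⊆ Φ.simple) {a : V} (ha : a ∈ I) :
    cpair (∑ γ ∈ Φ.posRootsOf I, γ) a = 2 := by
  classical
  have ha0 : a ≠ 0 := Φ.ne_zero_of_mem_roots (Φ.simple_subset (hI ha))
  have hmem := simple_mem_posRootsOf hI ha
  have hperm : ∑ γ ∈ (Φ.posRootsOf I).erase a, sref a γ = ∑ γ ∈ (Φ.posRootsOf I).erase a, γ :=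
    Finset.sum_nbij' (sref a) (sref a) (fun γ hγ => sref_mem_erase_posRootsOf hI ha hγ)
      (fun γ hγ => sref_mem_erase_posRootsOf hI ha hγ) (fun γ _ => sref_sref a γ)
      (fun γ _ => sref_sref a γ) fun _ _ => rfl
  have hQ : sref a (∑ γ ∈ Φ.posRootsOf I, γ) = ∑ γ ∈ Φ.posRootsOf I, γ - (2 : ℝ) • a :=
    calc sref a (∑ γ ∈ Φ.posRootsOf I, γ)
        = ∑ γ ∈ Φ.posRootsOf I, sref a γ := map_sum (srefₗ a) _ _
      _ = -a + ∑ γ ∈ (Φ.posRootsOf I).erase a, γ := by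
        rw [← Finset.add_sum_erase _ _ hmem, hperm, sref_self ha0]
      _ = ∑ γ ∈ Φ.posRootsOf I, γ - (2 : ℝ) • a := by
        rw [← Finset.add_sum_erase _ _ hmem]; module
  exact smul_left_injective ℝ ha0 (sub_right_inj.1 hQ)

lemma wordProdₗ_mem_roots {l : List V} (hl : ∀ α ∈ l, α ∈ Φ.roots) {γ : V} (hγ : γ ∈ Φ.roots) :
    wordProdₗ l γ ∈ Φ.roots := by
  induction l with
  | nil => exact hγ
  | cons a l ih =>
    exact Φ.reflect_mem a (hl a List.mem_cons_self) _
      (ih fun α hα => hl α (List.mem_cons_of_mem a hα))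

lemma coord_wordProdₗ (hI : I ⊆ Φ.simple) {l : List V} (hl : ∀ α ∈ l, α ∈ I) {δ : V}
    (hδ : δ ∈ Φ.simple) (hδI : δ ∉ I) (v : V) : Φ.coord δ (wordProdₗ l v) = Φ.coord δ v := by
  induction l with
  | nil => rfl
  | cons a l ih =>
    have ha := hl a List.mem_cons_self
    rw [wordProdₗ_cons, coord_sref_of_ne (hI ha) hδ (fun h => hδI (h ▸ ha)),
      ih fun α hα => hl α (List.mem_cons_of_mem a hα)]

lemma wordProdₗ_mem_posRoots_sdiff [DecidableEq V] (hI : I ⊆ Φ.simple) {l : List V}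
    (hl : ∀ α ∈ l, α ∈ I) {β : V} (hβ : β ∈ Φ.posRoots \ Φ.posRootsOf I) :
    wordProdₗ l β ∈ Φ.posRoots \ Φ.posRootsOf I := by
  obtain ⟨hβ, hβI⟩ := Finset.mem_sdiff.1 hβ
  obtain ⟨δ, hδ, hδI, hne⟩ : ∃ δ ∈ Φ.simple, δ ∉ I ∧ Φ.coord δ β ≠ 0 := by
    by_contra! h
    exact hβI ((mem_posRootsOf_iff hI).2 ⟨hβ, h⟩)
  have hpos : 0 < Φ.coord δ (wordProdₗ l β) := by
    rw [coord_wordProdₗ hI hl hδ hδI]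
    exact lt_of_le_of_ne ((mem_posRoots_iff.1 hβ).2 δ hδ) hne.symm
  have hroot := wordProdₗ_mem_roots (fun α hα => Φ.simple_subset (hI (hl α hα)))
    (mem_roots_of_mem_posRoots hβ)
  refine Finset.mem_sdiff.2 ⟨mem_posRoots_of_coord_pos hroot hδ hpos, fun h => ?_⟩
  exact hpos.ne' (((mem_posRootsOf_iff hI).1 h).2 δ hδ hδI)

lemma neg_wordProdₗ_mem_posRootsOf (hI : I ⊆ Φ.simple) {l : List V} (hl : ∀ α ∈ l, α ∈ I)
    {γ : V} (hγ : γ ∈ Φ.posRootsOf I) (hwγ : wordProdₗ l γ ∉ Φ.posRoots) :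
    -wordProdₗ l γ ∈ Φ.posRootsOf I := by
  have hroot := wordProdₗ_mem_roots (fun α hα => Φ.simple_subset (hI (hl α hα)))
    (mem_roots_of_mem_posRoots (posRootsOf_subset I hγ))
  have hnonpos := coord_nonpos_of_not_mem_posRoots hroot hwγ
  rw [mem_posRootsOf_iff hI] at hγ ⊢
  refine ⟨mem_posRoots_iff.2 ⟨Φ.neg_mem_roots hroot, fun δ hδ => ?_⟩, fun δ hδ hδI => ?_⟩
  · rw [map_neg]; linarith [hnonpos δ hδ]
  · rw [map_neg, coord_wordProdₗ hI hl hδ hδI, hγ.2 δ hδ hδI, neg_zero]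

lemma wordProdₗ_sum_posRootsOf (hI : I ⊆ Φ.simple) {l : List V} (hl : ∀ α ∈ l, α ∈ I)
    (hneg : ∀ γ ∈ Φ.posRootsOf I, wordProdₗ l γ ∉ Φ.posRoots) :
    wordProdₗ l (∑ γ ∈ Φ.posRootsOf I, γ) = -∑ γ ∈ Φ.posRootsOf I, γ := by
  classical
  have hinj : Set.InjOn (fun γ => -wordProdₗ l γ) (Φ.posRootsOf I) :=
    (neg_injective.comp (wordProdₗ_injective l)).injOn
  have himage : (Φ.posRootsOf I).image (fun γ => -wordProdₗ l γ) = Φ.posRootsOf I :=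
    Finset.eq_of_subset_of_card_le
      (Finset.image_subset_iff.2 fun γ hγ => neg_wordProdₗ_mem_posRootsOf hI hl hγ (hneg γ hγ))
      (Finset.card_image_of_injOn hinj).ge
  calc wordProdₗ l (∑ γ ∈ Φ.posRootsOf I, γ)
      = -∑ γ ∈ Φ.posRootsOf I, -wordProdₗ l γ := by rw [map_sum, Finset.sum_neg_distrib, neg_neg]
    _ = -∑ γ ∈ Φ.posRootsOf I, γ := by conv_rhs => rw [← himage, Finset.sum_image hinj]

lemma exists_simple_wordProdₗ_mem_posRoots (hI : I ⊆ Φ.simple) {l : List V}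
    (hl : ∀ α ∈ l, α ∈ I) {γ : V} (hγ : γ ∈ Φ.posRootsOf I)
    (hwγ : wordProdₗ l γ ∈ Φ.posRoots) : ∃ a ∈ I, wordProdₗ l a ∈ Φ.posRoots := by
  by_contra! h
  have hγr := mem_roots_of_mem_posRoots (posRootsOf_subset I hγ)
  obtain ⟨δ, hδ, hne⟩ := exists_coord_ne_zero (mem_roots_of_mem_posRoots hwγ)
  have hγI : γ = ∑ a ∈ I, Φ.coord a γ • a := by
    conv_lhs => rw [eq_sum_coord hγr]
    refine (Finset.sum_subset hI fun δ hδ hδI => ?_).symm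
    rw [((mem_posRootsOf_iff hI).1 hγ).2 δ hδ hδI, zero_smul]
  have hle : Φ.coord δ (wordProdₗ l γ) ≤ 0 := by
    rw [hγI, map_sum, map_sum]
    refine Finset.sum_nonpos fun a ha => ?_
    have hwa := wordProdₗ_mem_roots (fun α hα => Φ.simple_subset (hI (hl α hα)))
      (Φ.simple_subset (hI ha))
    rw [map_smul, map_smul, smul_eq_mul]
    exact mul_nonpos_of_nonneg_of_nonpos ((mem_posRoots_iff.1 (posRootsOf_subset I hγ)).2 a (hI ha))
      (coord_nonpos_of_not_mem_posRoots hwa (h a ha) δ hδ)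
  exact hne (le_antisymm hle ((mem_posRoots_iff.1 hwγ).2 δ hδ))

lemma card_filter_wordProdₗ_append_lt [DecidableEq V] (hI : I ⊆ Φ.simple) {l : List V} {a : V}
    (ha : a ∈ I) (hwa : wordProdₗ l a ∈ Φ.posRoots) :
    #{γ ∈ Φ.posRootsOf I | wordProdₗ (l ++ [a]) γ ∈ Φ.posRoots} <
      #{γ ∈ Φ.posRootsOf I | wordProdₗ l γ ∈ Φ.posRoots} := by
  have hmem : a ∈ {γ ∈ Φ.posRootsOf I | wordProdₗ l γ ∈ Φ.posRoots} :=
    Finset.mem_filter.2 ⟨simple_mem_posRootsOf hI ha, hwa⟩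
  refine lt_of_le_of_lt ?_ (Finset.card_erase_lt_of_mem hmem)
  refine Finset.card_le_card_of_injOn (sref a) (fun γ hγ => ?_)
    (Function.Involutive.injective (sref_sref a)).injOn
  rw [Finset.mem_coe, Finset.mem_filter, wordProdₗ_append_singleton] at hγ
  have hγa : γ ≠ a := by
    rintro rfl
    rw [sref_self (Φ.ne_zero_of_mem_roots (Φ.simple_subset (hI ha))), map_neg] at hγ
    exact neg_not_mem_posRoots hwa hγ.2
  obtain ⟨hne, hmem'⟩ := Finset.mem_erase.1
    (sref_mem_erase_posRootsOf hI ha (Finset.mem_erase.2 ⟨hγa, hγ.1⟩))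
  exact Finset.mem_erase.2 ⟨hne, Finset.mem_filter.2 ⟨hmem', hγ.2⟩⟩

/-- Such a word represents the longest element of `W_I`; take one that sends the fewest roots of
`R_I⁺` to positive roots. -/
lemma exists_wordProdₗ_posRootsOf_not_mem_posRoots (hI : I ⊆ Φ.simple) :
    ∃ l : List V, (∀ α ∈ l, α ∈ I) ∧ ∀ γ ∈ Φ.posRootsOf I, wordProdₗ l γ ∉ Φ.posRoots := by
  classical
  obtain ⟨l, hl, hmin⟩ :=
    (measure fun l : List V => #{γ ∈ Φ.posRootsOf I | wordProdₗ l γ ∈ Φ.posRoots}).wf.has_min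
      {l | ∀ α ∈ l, α ∈ I} ⟨[], by simp⟩
  refine ⟨l, hl, fun γ hγ hwγ => ?_⟩
  obtain ⟨a, ha, hwa⟩ := exists_simple_wordProdₗ_mem_posRoots hI hl hγ hwγ
  refine hmin (l ++ [a]) (fun α hα => ?_) (card_filter_wordProdₗ_append_lt hI ha hwa)
  rcases List.mem_append.1 hα with hα | hα
  · exact hl α hα
  · exact List.mem_singleton.1 hα ▸ ha

lemma cpair_nonneg_of_mem_posRoots {v : V} (hv : ∀ δ ∈ Φ.simple, 0 ≤ cpair v δ) {β : V}
    (hβ : β ∈ Φ.posRoots) : 0 ≤ cpair v β := by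
  have hβr := mem_roots_of_mem_posRoots hβ
  rw [cpair_nonneg_iff (Φ.ne_zero_of_mem_roots hβr), eq_sum_coord hβr, inner_sum]
  refine Finset.sum_nonneg fun δ hδ => ?_
  rw [real_inner_smul_right]
  exact mul_nonneg ((mem_posRoots_iff.1 hβ).2 δ hδ)
    ((cpair_nonneg_iff (Φ.ne_zero_of_mem_roots (Φ.simple_subset hδ)) v).1 (hv δ hδ))

lemma IsFundamentalWeights.cpair_sum [DecidableEq V] {ϖ : V → V} (hϖ : Φ.IsFundamentalWeights ϖ)
    (hI : I ⊆ Φ.simple) {δ : V} (hδ : δ ∈ Φ.simple) :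
    cpair (∑ α ∈ I, ϖ α) δ = if δ ∈ I then 1 else 0 := by
  rw [_root_.cpair_sum, Finset.sum_congr rfl fun α hα => hϖ α (hI hα) δ hδ, Finset.sum_ite_eq']

end RCRS

/-- For a subset `I ⊆ S` of the simple roots and every positive root
`β ∈ R⁺ \ R_I⁺`, one has `⟨Σ_{α ∈ I} ϖ_α − Σ_{γ ∈ R_I⁺} γ, β∨⟩ ≥ 0`. -/
theorem klt_flag_ineq' {V : Type*} [NormedAddCommGroup V] [InnerProductSpace ℝ V] [DecidableEq V]
    (Φ : RCRS V)
    (I : Finset V) (hI : I ⊆ Φ.simple)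
    (ϖ : V → V) (hϖ : Φ.IsFundamentalWeights ϖ) :
    ∀ β ∈ Φ.posRoots \ Φ.posRootsOf I,
      0 ≤ cpair ((∑ α ∈ I, ϖ α) - ∑ γ ∈ Φ.posRootsOf I, γ) β := by
  intro β hβ
  obtain ⟨l, hl, hneg⟩ := RCRS.exists_wordProdₗ_posRootsOf_not_mem_posRoots hI
  set μ := ∑ α ∈ I, ϖ α
  set Q := ∑ γ ∈ Φ.posRootsOf I, γ
  have hμ : ∀ δ ∈ Φ.simple, cpair μ δ = if δ ∈ I then 1 else 0 := fun δ hδ => hϖ.cpair_sum hI hδ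
  have hfix : wordProdₗ l (μ - (2 : ℝ)⁻¹ • Q) = μ - (2 : ℝ)⁻¹ • Q :=
    wordProdₗ_of_cpair_eq_zero fun a ha => by
      rw [cpair_sub, cpair_smul, hμ a (hI (hl a ha)), if_pos (hl a ha),
        RCRS.cpair_sum_posRootsOf hI (hl a ha)]
      norm_num
  have hwμ : wordProdₗ l μ = μ - Q :=
    calc wordProdₗ l μ = wordProdₗ l (μ - (2 : ℝ)⁻¹ • Q) + (2 : ℝ)⁻¹ • wordProdₗ l Q := by
          rw [map_sub, map_smul, sub_add_cancel]
      _ = μ - Q := by rw [hfix, RCRS.wordProdₗ_sum_posRootsOf hI hl hneg]; module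
  have hβ' := RCRS.wordProdₗ_mem_posRoots_sdiff hI (fun α hα => hl α (List.mem_reverse.1 hα)) hβ
  calc 0 ≤ cpair μ (wordProdₗ l.reverse β) :=
        RCRS.cpair_nonneg_of_mem_posRoots (fun δ hδ => by rw [hμ δ hδ]; split_ifs <;> norm_num)
          (Finset.mem_sdiff.1 hβ').1
    _ = cpair (wordProdₗ l μ) (wordProdₗ l (wordProdₗ l.reverse β)) := (cpair_wordProdₗ _ _ _).symm
    _ = cpair (μ - Q) β := by rw [hwμ, wordProdₗ_wordProdₗ_reverse]
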